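/- Let J be a closed subspace of a Banach space X satisfying the averaged 3-ball property (A). Then for every x in the closed unit ball of X with dist(x, J) ≥ 1 − ε, every y_1, y_2, y_3 in the closed unit ball of J and every ε > 0, there exists y ∈ J such that ‖x + y_i − y‖ ≤ 1 + 3ε for i = 1, 2, 3. -/

import Mathlib

open Filter Topology

noncomputable section

/-- The averaged 3-ball property (A) for a subspace `J` of `X`. -/
def AvgThreeBall {X : Type*} [NormedAddCommGroup X] [NormedSpace ℝ X]
    (J : Submodule ℝ X) : Prop :=
  ∀ y₁ y₂ y₃ x : X, y₁ ∈ J → y₂ ∈ J → y₃ ∈ J →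
    ‖y₁‖ ≤ 1 → ‖y₂‖ ≤ 1 → ‖y₃‖ ≤ 1 → ‖x‖ ≤ 1 →
    ∀ ε : ℝ, 0 < ε → ∃ y ∈ J,
      ‖x + y₁ - y‖ + ‖x - y₁ - y‖ ≤ 2 * (1 + ε) ∧
      ‖x + y₂ - y‖ + ‖x - y₂ - y‖ ≤ 2 * (1 + ε) ∧
      ‖x + y₃ - y‖ + ‖x - y₃ - y‖ ≤ 2 * (1 + ε)

/-- Since `yᵢ + y ∈ J`, the second summand is at least `dist(x, J) ≥ 1 - ε`. -/
lemma norm_add_sub_le_of_avg_le_of_infDist {E : Type*} [SeminormedAddCommGroup E]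
    (J : AddSubgroup E) {ε : ℝ} {x y : E} (hy : y ∈ J)
    (hdist : 1 - ε ≤ Metric.infDist x (J : Set E)) ⦃yᵢ : E⦄ (hyᵢ : yᵢ ∈ J)
    (havg : ‖x + yᵢ - y‖ + ‖x - yᵢ - y‖ ≤ 2 * (1 + ε)) :
    ‖x + yᵢ - y‖ ≤ 1 + 3 * ε := by
  have hfar : Metric.infDist x (J : Set E) ≤ ‖x - yᵢ - y‖ := by
    simpa only [dist_eq_norm, sub_add_eq_sub_sub] using
      Metric.infDist_le_dist_of_mem (J.add_mem hyᵢ hy)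
  linarith

theorem threeBall_of_avgThreeBall_of_dist_general
    (X : Type*) [NormedAddCommGroup X] [NormedSpace ℝ X]
    (J : Submodule ℝ X) (hA : AvgThreeBall J) :
    ∀ ε : ℝ, 0 < ε → ∀ x : X, ‖x‖ ≤ 1 → 1 - ε ≤ Metric.infDist x (J : Set X) →
    ∀ y₁ y₂ y₃ : X, y₁ ∈ J → y₂ ∈ J → y₃ ∈ J → ‖y₁‖ ≤ 1 → ‖y₂‖ ≤ 1 → ‖y₃‖ ≤ 1 →
    ∃ y ∈ J, ‖x + y₁ - y‖ ≤ 1 + 3 * ε ∧ ‖x + y₂ - y‖ ≤ 1 + 3 * ε ∧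
      ‖x + y₃ - y‖ ≤ 1 + 3 * ε := by
  intro ε hε x hx hdist y₁ y₂ y₃ h₁ h₂ h₃ n₁ n₂ n₃
  obtain ⟨y, hy, H₁, H₂, H₃⟩ := hA y₁ y₂ y₃ x h₁ h₂ h₃ n₁ n₂ n₃ hx ε hε
  have key := norm_add_sub_le_of_avg_le_of_infDist J.toAddSubgroup hy hdist
  exact ⟨y, hy, key h₁ H₁, key h₂ H₂, key h₃ H₃⟩

/-- If a closed subspace `J` satisfies (A), then for every `x` in the unit ball with
`dist(x, J) ≥ 1 − ε` one gets the conclusion of the 3-ball property with `1 + 3ε`. -/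
theorem threeBall_of_avgThreeBall_of_dist
    (X : Type*) [NormedAddCommGroup X] [NormedSpace ℝ X] [CompleteSpace X]
    (J : Submodule ℝ X) (hJ : IsClosed (J : Set X)) (hA : AvgThreeBall J) :
    ∀ ε : ℝ, 0 < ε → ∀ x : X, ‖x‖ ≤ 1 → 1 - ε ≤ Metric.infDist x (J : Set X) →
    ∀ y₁ y₂ y₃ : X, y₁ ∈ J → y₂ ∈ J → y₃ ∈ J → ‖y₁‖ ≤ 1 → ‖y₂‖ ≤ 1 → ‖y₃‖ ≤ 1 →
    ∃ y ∈ J, ‖x + y₁ - y‖ ≤ 1 + 3 * ε ∧ ‖x + y₂ - y‖ ≤ 1 + 3 * ε ∧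
      ‖x + y₃ - y‖ ≤ 1 + 3 * ε :=
  threeBall_of_avgThreeBall_of_dist_general X J hA
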